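/- Suppose σ̃_{j,m} > 0. Then ‖K*K ṽ_{j,m} − σ̃_{j,m}² ṽ_{j,m}‖_{L²(0,1)} ≤ C_K²/(6m²) + C_K³/(6·σ̃_{j,m}·m²); in other words, ṽ_{j,m} is an approximate eigenfunction of K*K with approximate eigenvalue σ̃_{j,m}². -/

import Mathlib

open Real MeasureTheory

/-- The unit interval `[0,1]`. -/
def I01 : Set ℝ := Set.Icc 0 1

/-- `κ : [0,1]² → ℝ` is twice continuously differentiable, with partial derivatives
`κ10 = ∂ₓκ`, `κ01 = ∂ᵧκ`, `κ20 = ∂ₓ²κ`, `κ11 = ∂ₓ∂ᵧκ`, `κ02 = ∂ᵧ²κ`, and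
`CK` bounds the absolute values of `κ` and all its partial derivatives of order `≤ 2`
on `[0,1]²` (in the paper, `CK` is the supremum of these quantities). -/
def IsC2KernelWith (κ κ10 κ01 κ20 κ11 κ02 : ℝ → ℝ → ℝ) (CK : ℝ) : Prop :=
  (∀ x ∈ I01, ∀ y ∈ I01, HasDerivWithinAt (fun x' => κ x' y) (κ10 x y) I01 x) ∧
  (∀ x ∈ I01, ∀ y ∈ I01, HasDerivWithinAt (fun y' => κ x y') (κ01 x y) I01 y) ∧
  (∀ x ∈ I01, ∀ y ∈ I01, HasDerivWithinAt (fun x' => κ10 x' y) (κ20 x y) I01 x) ∧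
  (∀ x ∈ I01, ∀ y ∈ I01, HasDerivWithinAt (fun y' => κ10 x y') (κ11 x y) I01 y) ∧
  (∀ x ∈ I01, ∀ y ∈ I01, HasDerivWithinAt (fun y' => κ01 x y') (κ02 x y) I01 y) ∧
  ContinuousOn (fun p : ℝ × ℝ => κ p.1 p.2) (I01 ×ˢ I01) ∧
  ContinuousOn (fun p : ℝ × ℝ => κ10 p.1 p.2) (I01 ×ˢ I01) ∧
  ContinuousOn (fun p : ℝ × ℝ => κ01 p.1 p.2) (I01 ×ˢ I01) ∧
  ContinuousOn (fun p : ℝ × ℝ => κ20 p.1 p.2) (I01 ×ˢ I01) ∧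
  ContinuousOn (fun p : ℝ × ℝ => κ11 p.1 p.2) (I01 ×ˢ I01) ∧
  ContinuousOn (fun p : ℝ × ℝ => κ02 p.1 p.2) (I01 ×ˢ I01) ∧
  (∀ x ∈ I01, ∀ y ∈ I01,
    |κ x y| ≤ CK ∧ |κ10 x y| ≤ CK ∧ |κ01 x y| ≤ CK ∧
    |κ20 x y| ≤ CK ∧ |κ11 x y| ≤ CK ∧ |κ02 x y| ≤ CK)

/-- The midpoint grid points `ξ_{l,m} = (2l−1)/(2m)`. -/
noncomputable def gridPt (m l : ℕ) : ℝ := (2 * (l : ℝ) - 1) / (2 * (m : ℝ))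

/-!
Write `ṽ = c Σₗ wₗ κ(ξₗ, ·)` with `c = 1/(σ̃√m)`. The composite midpoint rule approximates
`∫₀¹ f g` within `C²/(6m²)` when `f`, `g` and their first two derivatives are bounded by `C`.
Applied to each `κ(y,·) κ(ξₗ,·)` and summed against the unit vector `w` (Cauchy–Schwarz costs a
factor `√m`), it shows that `∫ κ(y,t) ṽ(t) dt` is within `C_K²/(6σ̃m²)` of its quadrature value,
which the relation `A_mᵀ w = σ̃ z` turns into `u(y) = (1/√m) Σᵢ zᵢ κ(y, ξᵢ)`. In the same way
`∫ κ(y,x) u(y) dy` is within `C_K²/(6m²)` of `σ̃² ṽ(x)`, now by `A_m z = σ̃ w`. Together these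
bound `K*K ṽ − σ̃² ṽ` pointwise on `[0,1]`, hence in `L²`.
-/

open Set

theorem integral_abs_sub_left (c t : ℝ) : ∫ s in c..t, |s - c| = (t - c) * |t - c| / 2 := by
  rw [intervalIntegral.integral_comp_sub_right (fun u => |u|) c, sub_self]
  rcases le_total 0 (t - c) with h | h
  · rw [intervalIntegral.integral_congr fun u hu => abs_of_nonneg (uIcc_of_le h ▸ hu).1,
      integral_id, abs_of_nonneg h]
    ring
  · rw [intervalIntegral.integral_congr fun u hu => abs_of_nonpos (uIcc_of_ge h ▸ hu).2,
      intervalIntegral.integral_neg, integral_id, abs_of_nonpos h]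
    ring

theorem abs_sub_sub_mul_sub_le_of_hasDerivWithinAt {f f' f'' : ℝ → ℝ} {a b M c t : ℝ}
    (hf : ∀ x ∈ Icc a b, HasDerivWithinAt f (f' x) (Icc a b) x)
    (hf' : ∀ x ∈ Icc a b, HasDerivWithinAt f' (f'' x) (Icc a b) x)
    (hM : ∀ x ∈ Icc a b, |f'' x| ≤ M) (hc : c ∈ Icc a b) (ht : t ∈ Icc a b) :
    |f t - f c - f' c * (t - c)| ≤ M * (t - c) ^ 2 / 2 := by
  have hsub : uIcc c t ⊆ Icc a b := uIcc_subset_Icc hc ht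
  have hf'_cont : ContinuousOn f' (uIcc c t) :=
    fun x hx => ((hf' x (hsub hx)).continuousWithinAt).mono hsub
  have hftc : ∫ s in c..t, f' s = f t - f c := by
    refine intervalIntegral.integral_eq_sub_of_hasDeriv_right
      (fun x hx => ((hf x (hsub hx)).continuousWithinAt).mono hsub) (fun x hx => ?_)
      hf'_cont.intervalIntegrable
    have hx' : x ∈ Ioo a b :=
      Ioo_subset_Ioo (le_min hc.1 ht.1) (max_le hc.2 ht.2) hx
    exact ((hf x (Ioo_subset_Icc_self hx')).hasDerivAt (Icc_mem_nhds hx'.1 hx'.2)).hasDerivWithinAt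
  have hremainder : f t - f c - f' c * (t - c) = ∫ s in c..t, (f' s - f' c) := by
    rw [intervalIntegral.integral_sub hf'_cont.intervalIntegrable intervalIntegrable_const, hftc,
      intervalIntegral.integral_const, smul_eq_mul]
    ring
  have hlip : ∀ s ∈ Icc a b, ‖f' s - f' c‖ ≤ M * |s - c| := fun s hs =>
    (convex_Icc a b).norm_image_sub_le_of_norm_hasDerivWithin_le hf' hM hc hs
  have hM0 : 0 ≤ M := (abs_nonneg _).trans (hM c hc)
  calc |f t - f c - f' c * (t - c)| = ‖∫ s in c..t, (f' s - f' c)‖ := by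
        rw [hremainder, Real.norm_eq_abs]
    _ ≤ |∫ s in c..t, M * abs (s - c)| :=
        intervalIntegral.norm_integral_le_abs_of_norm_le
          ((ae_restrict_mem measurableSet_uIoc).mono fun s hs =>
            hlip s (hsub (uIoc_subset_uIcc hs)))
          ((by fun_prop : Continuous fun s => M * |s - c|).intervalIntegrable _ _)
    _ = M * (t - c) ^ 2 / 2 := by
        rw [intervalIntegral.integral_const_mul, integral_abs_sub_left, abs_mul, abs_of_nonneg hM0,
          abs_div, abs_mul, abs_abs, ← sq, sq_abs, abs_two]
        ring

theorem continuousOn_intervalIntegral_of_continuousOn_prod {X E : Type*} [TopologicalSpace X]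
    [FirstCountableTopology X] [NormedAddCommGroup E] [NormedSpace ℝ E] {F : X → ℝ → E}
    {s : Set X} {a b : ℝ} (hs : IsCompact s)
    (hF : ContinuousOn (Function.uncurry F) (s ×ˢ uIcc a b)) :
    ContinuousOn (fun x => ∫ t in a..b, F x t) s := by
  obtain ⟨C, hC⟩ := (hs.prod isCompact_uIcc).exists_bound_of_continuousOn hF
  intro x₀ hx₀
  refine intervalIntegral.continuousWithinAt_of_dominated_interval (bound := fun _ => C)
    (eventually_nhdsWithin_of_forall fun x hx => ?_)
    (eventually_nhdsWithin_of_forall fun x hx =>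
      Filter.Eventually.of_forall fun t ht => hC (x, t) ⟨hx, uIoc_subset_uIcc ht⟩)
    intervalIntegrable_const
    (Filter.Eventually.of_forall fun t ht =>
      (hF (x₀, t) ⟨hx₀, uIoc_subset_uIcc ht⟩).comp (f := fun x => (x, t))
        (continuousWithinAt_id.prodMk continuousWithinAt_const)
        fun x hx => ⟨hx, uIoc_subset_uIcc ht⟩)
  exact ((hF.comp (continuous_const.prodMk continuous_id).continuousOn fun t ht => ⟨hx, ht⟩).mono
    uIoc_subset_uIcc).aestronglyMeasurable measurableSet_uIoc

theorem abs_integral_mul_sub_integral_mul_le {g F Q : ℝ → ℝ} {a b C δ : ℝ}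
    (hF : IntervalIntegrable (fun t => g t * F t) volume a b)
    (hQ : IntervalIntegrable (fun t => g t * Q t) volume a b)
    (hg : ∀ t ∈ uIcc a b, |g t| ≤ C) (hFQ : ∀ t ∈ uIcc a b, |F t - Q t| ≤ δ) :
    |(∫ t in a..b, g t * F t) - ∫ t in a..b, g t * Q t| ≤ C * δ * |b - a| := by
  rw [← intervalIntegral.integral_sub hF hQ, ← Real.norm_eq_abs]
  refine intervalIntegral.norm_integral_le_of_norm_le_const fun t ht => ?_
  have ht' := uIoc_subset_uIcc ht
  rw [← mul_sub, Real.norm_eq_abs, abs_mul]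
  exact mul_le_mul (hg t ht') (hFQ t ht') (abs_nonneg _) ((abs_nonneg _).trans (hg t ht'))

theorem sqrt_integral_sq_le {f : ℝ → ℝ} {a b B : ℝ} (hB : 0 ≤ B) (hf : ∀ x ∈ uIoc a b, |f x| ≤ B) :
    √(∫ x in a..b, f x ^ 2) ≤ B * √|b - a| := by
  have hf2 : ∀ x ∈ uIoc a b, ‖f x ^ 2‖ ≤ B ^ 2 := fun x hx => by
    rw [Real.norm_eq_abs, abs_pow]
    exact pow_le_pow_left₀ (abs_nonneg _) (hf x hx) 2
  calc √(∫ x in a..b, f x ^ 2) ≤ √(B ^ 2 * |b - a|) :=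
        Real.sqrt_le_sqrt ((le_abs_self _).trans
          (intervalIntegral.norm_integral_le_of_norm_le_const hf2))
    _ = B * √|b - a| := by rw [Real.sqrt_mul (sq_nonneg B), Real.sqrt_sq hB]

theorem abs_sum_mul_le_sqrt_card_mul {ι : Type*} {S : Finset ι} {u e : ι → ℝ} {ε : ℝ}
    (hu : ∑ l ∈ S, u l ^ 2 = 1) (hε : 0 ≤ ε) (he : ∀ l ∈ S, |e l| ≤ ε) :
    |∑ l ∈ S, u l * e l| ≤ √S.card * ε := by
  have he2 : ∑ l ∈ S, e l ^ 2 ≤ S.card * ε ^ 2 := by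
    simpa using Finset.sum_le_card_nsmul S _ _ fun l hl =>
      sq_le_sq.2 ((he l hl).trans (le_abs_self ε))
  calc |∑ l ∈ S, u l * e l| ≤ √(S.card * ε ^ 2) := Real.abs_le_sqrt <|
        (Finset.sum_mul_sq_le_sq_mul_sq S u e).trans (by rw [hu, one_mul]; exact he2)
    _ = √S.card * ε := by rw [Real.sqrt_mul (Nat.cast_nonneg _), Real.sqrt_sq hε]

theorem abs_integral_sub_mul_midpoint_le {f f' f'' : ℝ → ℝ} {a b M : ℝ} (hab : a ≤ b)
    (hf : ∀ x ∈ Icc a b, HasDerivWithinAt f (f' x) (Icc a b) x)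
    (hf' : ∀ x ∈ Icc a b, HasDerivWithinAt f' (f'' x) (Icc a b) x)
    (hM : ∀ x ∈ Icc a b, |f'' x| ≤ M) :
    |(∫ t in a..b, f t) - (b - a) * f ((a + b) / 2)| ≤ M * (b - a) ^ 3 / 24 := by
  set c := (a + b) / 2 with hc_def
  have hc : c ∈ Icc a b := ⟨by rw [hc_def]; linarith, by rw [hc_def]; linarith⟩
  have hlin : ∫ t in a..b, (f c + f' c * (t - c)) = (b - a) * f c := by
    simp only [intervalIntegral.integral_add intervalIntegrable_const
      ((by fun_prop : Continuous fun t => f' c * (t - c)).intervalIntegrable _ _),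
      intervalIntegral.integral_const, intervalIntegral.integral_const_mul,
      intervalIntegral.integral_comp_sub_right (fun t => t), integral_id, smul_eq_mul, c]
    ring
  have hquad : ∫ t in a..b, M * (t - c) ^ 2 / 2 = M * (b - a) ^ 3 / 24 := by
    simp only [intervalIntegral.integral_div, intervalIntegral.integral_const_mul,
      intervalIntegral.integral_comp_sub_right (fun t => t ^ 2), integral_pow, c]
    ring
  calc |(∫ t in a..b, f t) - (b - a) * f c|
      = ‖∫ t in a..b, (f t - (f c + f' c * (t - c)))‖ := by
        rw [intervalIntegral.integral_sub
          (ContinuousOn.intervalIntegrable_of_Icc hab fun x hx => (hf x hx).continuousWithinAt)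
          ((by fun_prop : Continuous fun t => f c + f' c * (t - c)).intervalIntegrable _ _),
          hlin, Real.norm_eq_abs]
    _ ≤ |∫ t in a..b, M * (t - c) ^ 2 / 2| :=
        intervalIntegral.norm_integral_le_abs_of_norm_le
          ((ae_restrict_mem measurableSet_uIoc).mono fun t ht => by
            rw [uIoc_of_le hab] at ht
            simpa only [Real.norm_eq_abs, sub_add_eq_sub_sub] using
              abs_sub_sub_mul_sub_le_of_hasDerivWithinAt hf hf' hM hc (Ioc_subset_Icc_self ht))
          ((by fun_prop : Continuous fun t => M * (t - c) ^ 2 / 2).intervalIntegrable _ _)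
    _ = M * (b - a) ^ 3 / 24 := by
        have hM0 : 0 ≤ M := (abs_nonneg _).trans (hM c hc)
        rw [hquad, abs_of_nonneg (by have := sub_nonneg.2 hab; positivity)]

noncomputable def midpointSum (m : ℕ) (f : ℝ → ℝ) : ℝ :=
  (m : ℝ)⁻¹ * ∑ l ∈ Finset.Icc 1 m, f (gridPt m l)

theorem uIcc_zero_one : uIcc (0:ℝ) 1 = I01 := uIcc_of_le zero_le_one

theorem gridPt_mem_I01 {m l : ℕ} (hl : l ∈ Finset.Icc 1 m) : gridPt m l ∈ I01 := by
  obtain ⟨hl1, hlm⟩ := Finset.mem_Icc.1 hl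
  have hl1' : (1 : ℝ) ≤ l := by exact_mod_cast hl1
  have hlm' : (l : ℝ) ≤ m := by exact_mod_cast hlm
  exact ⟨div_nonneg (by linarith) (by linarith), (div_le_one (by linarith)).2 (by linarith)⟩

theorem abs_integral_sub_midpointSum_le {f f' f'' : ℝ → ℝ} {M : ℝ} {m : ℕ} (hm : 0 < m)
    (hf : ∀ x ∈ I01, HasDerivWithinAt f (f' x) I01 x)
    (hf' : ∀ x ∈ I01, HasDerivWithinAt f' (f'' x) I01 x)
    (hM : ∀ x ∈ I01, |f'' x| ≤ M) :
    |(∫ t in (0:ℝ)..1, f t) - midpointSum m f| ≤ M / (24 * m ^ 2) := by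
  have hm' : (0 : ℝ) < m := by exact_mod_cast hm
  set node : ℕ → ℝ := fun k => k / m with hnode
  have hnode_le : ∀ k, node k ≤ node (k + 1) := fun k => by
    simp only [hnode]; gcongr; linarith
  have hsub : ∀ k < m, Icc (node k) (node (k + 1)) ⊆ I01 := fun k hk =>
    Icc_subset_Icc (by positivity) ((div_le_one hm').2 (by exact_mod_cast hk))
  have hpiece : ∀ k < m, |(∫ t in (node k)..(node (k + 1)), f t) - (m : ℝ)⁻¹ * f (gridPt m (k + 1))|
      ≤ M / (24 * m ^ 3) := fun k hk => by
    have h := abs_integral_sub_mul_midpoint_le (hnode_le k)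
      (fun x hx => (hf x (hsub k hk hx)).mono (hsub k hk))
      (fun x hx => (hf' x (hsub k hk hx)).mono (hsub k hk)) (fun x hx => hM x (hsub k hk hx))
    have hlen : node (k + 1) - node k = (m : ℝ)⁻¹ := by
      simp only [hnode]; push_cast; field_simp; ring
    have hmid : (node k + node (k + 1)) / 2 = gridPt m (k + 1) := by
      simp only [hnode, gridPt]; push_cast; field_simp; ring
    rw [hlen, hmid] at h
    calc _ ≤ M * (m : ℝ)⁻¹ ^ 3 / 24 := h
      _ = M / (24 * m ^ 3) := by field_simp
  have hsplit : (∫ t in (0:ℝ)..1, f t) - midpointSum m f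
      = ∑ k ∈ Finset.range m,
          ((∫ t in (node k)..(node (k + 1)), f t) - (m : ℝ)⁻¹ * f (gridPt m (k + 1))) := by
    rw [Finset.sum_sub_distrib, intervalIntegral.sum_integral_adjacent_intervals fun k hk =>
      ContinuousOn.intervalIntegrable_of_Icc (hnode_le k) fun x hx =>
        ((hf x (hsub k hk hx)).continuousWithinAt).mono (hsub k hk)]
    simp only [hnode, Nat.cast_zero, zero_div, div_self hm'.ne', midpointSum, Finset.mul_sum]
    rw [← Finset.Ico_add_one_right_eq_Icc, Finset.sum_Ico_eq_sum_range]
    simp only [add_tsub_cancel_right, add_comm 1]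
  calc _ ≤ ∑ k ∈ Finset.range m, M / (24 * m ^ 3) := by
        rw [hsplit]
        exact (Finset.abs_sum_le_sum_abs _ _).trans
          (Finset.sum_le_sum fun k hk => hpiece k (Finset.mem_range.1 hk))
    _ = M / (24 * m ^ 2) := by
        rw [Finset.sum_const, Finset.card_range, nsmul_eq_mul]; field_simp

theorem abs_integral_mul_sub_midpointSum_le {f f' f'' g g' g'' : ℝ → ℝ} {C : ℝ} {m : ℕ}
    (hm : 0 < m)
    (hf : ∀ x ∈ I01, HasDerivWithinAt f (f' x) I01 x)
    (hf' : ∀ x ∈ I01, HasDerivWithinAt f' (f'' x) I01 x)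
    (hg : ∀ x ∈ I01, HasDerivWithinAt g (g' x) I01 x)
    (hg' : ∀ x ∈ I01, HasDerivWithinAt g' (g'' x) I01 x)
    (hfC : ∀ x ∈ I01, |f x| ≤ C ∧ |f' x| ≤ C ∧ |f'' x| ≤ C)
    (hgC : ∀ x ∈ I01, |g x| ≤ C ∧ |g' x| ≤ C ∧ |g'' x| ≤ C) :
    |(∫ t in (0:ℝ)..1, f t * g t) - midpointSum m (fun t => f t * g t)| ≤ C ^ 2 / (6 * m ^ 2) := by
  have hmul : ∀ x ∈ I01, ∀ p q : ℝ, |p| ≤ C → |q| ≤ C → |p * q| ≤ C ^ 2 :=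
    fun x hx p q hp hq => by
      rw [abs_mul, sq]
      exact mul_le_mul hp hq (abs_nonneg _) ((abs_nonneg _).trans (hfC x hx).1)
  refine (abs_integral_sub_midpointSum_le (M := 4 * C ^ 2) hm
    (fun x hx => (hf x hx).mul (hg x hx))
    (fun x hx => ((hf' x hx).mul (hg x hx)).add ((hf x hx).mul (hg' x hx)))
    (fun x hx => ?_)).trans_eq (by ring)
  obtain ⟨hf0, hf1, hf2⟩ := hfC x hx
  obtain ⟨hg0, hg1, hg2⟩ := hgC x hx
  have := abs_add_le (f'' x * g x + f' x * g' x) (f' x * g' x + f x * g'' x)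
  have := abs_add_le (f'' x * g x) (f' x * g' x)
  have := abs_add_le (f' x * g' x) (f x * g'' x)
  linarith [hmul x hx _ _ hf2 hg0, hmul x hx _ _ hf1 hg1, hmul x hx _ _ hf0 hg2]

theorem midpointSum_mul_sum {ι : Type*} (m : ℕ) (S : Finset ι) (g : ℝ → ℝ) (h : ι → ℝ → ℝ)
    (u : ι → ℝ) (c : ℝ) :
    midpointSum m (fun t => g t * (c * ∑ l ∈ S, u l * h l t))
      = c * ∑ l ∈ S, u l * midpointSum m (fun t => g t * h l t) := by
  simp only [midpointSum, Finset.mul_sum]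
  rw [Finset.sum_comm]
  exact Finset.sum_congr rfl fun _ _ => Finset.sum_congr rfl fun _ _ => by ring

theorem integral_mul_sum {ι : Type*} {S : Finset ι} {g : ℝ → ℝ} {h : ι → ℝ → ℝ} {a b : ℝ}
    (hint : ∀ l ∈ S, IntervalIntegrable (fun t => g t * h l t) volume a b) (u : ι → ℝ) (c : ℝ) :
    ∫ t in a..b, g t * (c * ∑ l ∈ S, u l * h l t)
      = c * ∑ l ∈ S, u l * ∫ t in a..b, g t * h l t := by
  have hexpand : ∀ t, g t * (c * ∑ l ∈ S, u l * h l t) = ∑ l ∈ S, c * u l * (g t * h l t) :=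
    fun t => by rw [Finset.mul_sum, Finset.mul_sum]; exact Finset.sum_congr rfl fun _ _ => by ring
  rw [intervalIntegral.integral_congr fun t _ => hexpand t,
    intervalIntegral.integral_finsetSum fun l hl => (hint l hl).const_mul _, Finset.mul_sum]
  exact Finset.sum_congr rfl fun l _ => by rw [intervalIntegral.integral_const_mul]; ring

theorem abs_integral_mul_sum_sub_midpointSum_le {ι : Type*} {S : Finset ι} {g : ℝ → ℝ}
    {h : ι → ℝ → ℝ} {u : ι → ℝ} {c ε : ℝ} {m : ℕ} (hu : ∑ l ∈ S, u l ^ 2 = 1) (hε : 0 ≤ ε)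
    (hint : ∀ l ∈ S, IntervalIntegrable (fun t => g t * h l t) volume 0 1)
    (herr : ∀ l ∈ S,
      |(∫ t in (0:ℝ)..1, g t * h l t) - midpointSum m (fun t => g t * h l t)| ≤ ε) :
    |(∫ t in (0:ℝ)..1, g t * (c * ∑ l ∈ S, u l * h l t))
        - midpointSum m (fun t => g t * (c * ∑ l ∈ S, u l * h l t))| ≤ |c| * (√S.card * ε) := by
  rw [integral_mul_sum hint, midpointSum_mul_sum, ← mul_sub, ← Finset.sum_sub_distrib, abs_mul]
  simp only [← mul_sub]
  gcongr
  exact abs_sum_mul_le_sqrt_card_mul hu hε herr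

theorem midpointSum_mul_sum_eq {g : ℝ → ℝ} {h : ℕ → ℝ → ℝ} {u v : ℕ → ℝ} {c σ : ℝ} {m : ℕ}
    (huv : ∀ i ∈ Finset.Icc 1 m,
      ∑ l ∈ Finset.Icc 1 m, (h l (gridPt m i) / m) * u l = σ * v i) :
    midpointSum m (fun t => g t * (c * ∑ l ∈ Finset.Icc 1 m, u l * h l t))
      = c * σ * ∑ i ∈ Finset.Icc 1 m, v i * g (gridPt m i) := by
  calc _ = c * ∑ i ∈ Finset.Icc 1 m, g (gridPt m i) *
        ∑ l ∈ Finset.Icc 1 m, (h l (gridPt m i) / m) * u l := by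
        simp only [midpointSum, Finset.mul_sum]
        exact Finset.sum_congr rfl fun _ _ => Finset.sum_congr rfl fun _ _ => by ring
    _ = c * ∑ i ∈ Finset.Icc 1 m, g (gridPt m i) * (σ * v i) := by
        congr 1
        exact Finset.sum_congr rfl fun i hi => by rw [huv i hi]
    _ = c * σ * ∑ i ∈ Finset.Icc 1 m, v i * g (gridPt m i) := by
        simp only [Finset.mul_sum]
        exact Finset.sum_congr rfl fun _ _ => by ring

theorem abs_integral_mul_sum_sub_le {g : ℝ → ℝ} {h : ℕ → ℝ → ℝ} {u v : ℕ → ℝ} {c σ ε : ℝ}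
    {m : ℕ} (hu : ∑ l ∈ Finset.Icc 1 m, u l ^ 2 = 1) (hε : 0 ≤ ε)
    (hint : ∀ l ∈ Finset.Icc 1 m, IntervalIntegrable (fun t => g t * h l t) volume 0 1)
    (herr : ∀ l ∈ Finset.Icc 1 m,
      |(∫ t in (0:ℝ)..1, g t * h l t) - midpointSum m (fun t => g t * h l t)| ≤ ε)
    (huv : ∀ i ∈ Finset.Icc 1 m,
      ∑ l ∈ Finset.Icc 1 m, (h l (gridPt m i) / m) * u l = σ * v i) :
    |(∫ t in (0:ℝ)..1, g t * (c * ∑ l ∈ Finset.Icc 1 m, u l * h l t))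
        - c * σ * ∑ i ∈ Finset.Icc 1 m, v i * g (gridPt m i)| ≤ |c| * (√m * ε) := by
  rw [← midpointSum_mul_sum_eq huv]
  simpa using abs_integral_mul_sum_sub_midpointSum_le (c := c) hu hε hint herr

section Kernel

variable {κ κ10 κ01 κ20 κ11 κ02 : ℝ → ℝ → ℝ} {CK : ℝ} {m : ℕ} {w z : ℕ → ℝ} {vt : ℝ → ℝ} {σ : ℝ}

theorem IsC2KernelWith.abs_le
    (hker : IsC2KernelWith κ κ10 κ01 κ20 κ11 κ02 CK) {x y : ℝ} (hx : x ∈ I01) (hy : y ∈ I01) :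
    |κ x y| ≤ CK :=
  (hker.2.2.2.2.2.2.2.2.2.2.2 x hx y hy).1

theorem IsC2KernelWith.nonneg (hker : IsC2KernelWith κ κ10 κ01 κ20 κ11 κ02 CK) : 0 ≤ CK :=
  (abs_nonneg _).trans (hker.abs_le (x := 0) (y := 0) ⟨le_rfl, zero_le_one⟩ ⟨le_rfl, zero_le_one⟩)

theorem IsC2KernelWith.continuousOn (hker : IsC2KernelWith κ κ10 κ01 κ20 κ11 κ02 CK) :
    ContinuousOn (Function.uncurry κ) (I01 ×ˢ I01) :=
  hker.2.2.2.2.2.1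

theorem IsC2KernelWith.continuousOn_right (hker : IsC2KernelWith κ κ10 κ01 κ20 κ11 κ02 CK)
    {x : ℝ} (hx : x ∈ I01) : ContinuousOn (κ x) I01 :=
  hker.continuousOn.comp (continuous_const.prodMk continuous_id).continuousOn fun _ ht => ⟨hx, ht⟩

theorem IsC2KernelWith.continuousOn_left (hker : IsC2KernelWith κ κ10 κ01 κ20 κ11 κ02 CK)
    {y : ℝ} (hy : y ∈ I01) : ContinuousOn (fun x => κ x y) I01 :=
  hker.continuousOn.comp (continuous_id.prodMk continuous_const).continuousOn fun _ ht => ⟨ht, hy⟩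

theorem IsC2KernelWith.abs_integral_mul_sub_midpointSum_right_le
    (hker : IsC2KernelWith κ κ10 κ01 κ20 κ11 κ02 CK) (hm : 0 < m) {x x' : ℝ}
    (hx : x ∈ I01) (hx' : x' ∈ I01) :
    |(∫ t in (0:ℝ)..1, κ x t * κ x' t) - midpointSum m (fun t => κ x t * κ x' t)|
      ≤ CK ^ 2 / (6 * m ^ 2) := by
  obtain ⟨-, h01, -, -, h02, -, -, -, -, -, -, hbd⟩ := hker
  exact abs_integral_mul_sub_midpointSum_le hm (h01 x hx) (h02 x hx) (h01 x' hx') (h02 x' hx')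
    (fun t ht => ⟨(hbd x hx t ht).1, (hbd x hx t ht).2.2.1, (hbd x hx t ht).2.2.2.2.2⟩)
    (fun t ht => ⟨(hbd x' hx' t ht).1, (hbd x' hx' t ht).2.2.1, (hbd x' hx' t ht).2.2.2.2.2⟩)

theorem IsC2KernelWith.abs_integral_mul_sub_midpointSum_left_le
    (hker : IsC2KernelWith κ κ10 κ01 κ20 κ11 κ02 CK) (hm : 0 < m) {y y' : ℝ}
    (hy : y ∈ I01) (hy' : y' ∈ I01) :
    |(∫ t in (0:ℝ)..1, κ t y * κ t y') - midpointSum m (fun t => κ t y * κ t y')|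
      ≤ CK ^ 2 / (6 * m ^ 2) := by
  obtain ⟨h10, -, h20, -, -, -, -, -, -, -, -, hbd⟩ := hker
  exact abs_integral_mul_sub_midpointSum_le hm (fun t ht => h10 t ht y hy)
    (fun t ht => h20 t ht y hy) (fun t ht => h10 t ht y' hy') (fun t ht => h20 t ht y' hy')
    (fun t ht => ⟨(hbd t ht y hy).1, (hbd t ht y hy).2.1, (hbd t ht y hy).2.2.2.1⟩)
    (fun t ht => ⟨(hbd t ht y' hy').1, (hbd t ht y' hy').2.1, (hbd t ht y' hy').2.2.2.1⟩)

theorem abs_kernel_apply_sub_le (hker : IsC2KernelWith κ κ10 κ01 κ20 κ11 κ02 CK)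
    (hm : 0 < m) (hσ : 0 < σ) (hw : ∑ l ∈ Finset.Icc 1 m, w l ^ 2 = 1)
    (hAt : ∀ i ∈ Finset.Icc 1 m,
      (∑ l ∈ Finset.Icc 1 m, (κ (gridPt m l) (gridPt m i) / m) * w l) = σ * z i)
    (hvt : ∀ x, vt x = (1 / (σ * √m)) * ∑ l ∈ Finset.Icc 1 m, w l * κ (gridPt m l) x)
    {y : ℝ} (hy : y ∈ I01) :
    |(∫ t in (0:ℝ)..1, κ y t * vt t) - (√m)⁻¹ * ∑ i ∈ Finset.Icc 1 m, z i * κ y (gridPt m i)|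
      ≤ CK ^ 2 / (6 * σ * m ^ 2) := by
  have hsqrt : 0 < √(m : ℝ) := Real.sqrt_pos.2 (by exact_mod_cast hm)
  have h := abs_integral_mul_sum_sub_le (c := 1 / (σ * √m)) hw (by positivity)
    (fun l hl => ((hker.continuousOn_right hy).mul
      (hker.continuousOn_right (gridPt_mem_I01 hl))).intervalIntegrable_of_Icc zero_le_one)
    (fun l hl => hker.abs_integral_mul_sub_midpointSum_right_le hm hy (gridPt_mem_I01 hl)) hAt
  rw [show 1 / (σ * √m) * σ = (√m)⁻¹ by field_simp,
    abs_of_pos (show 0 < 1 / (σ * √m) by positivity)] at h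
  simp only [hvt]
  exact h.trans_eq (by field_simp)

theorem abs_kernel_adjoint_apply_sub_le
    (hker : IsC2KernelWith κ κ10 κ01 κ20 κ11 κ02 CK)
    (hm : 0 < m) (hσ : 0 < σ) (hz : ∑ l ∈ Finset.Icc 1 m, z l ^ 2 = 1)
    (hA : ∀ i ∈ Finset.Icc 1 m,
      (∑ l ∈ Finset.Icc 1 m, (κ (gridPt m i) (gridPt m l) / m) * z l) = σ * w i)
    (hvt : ∀ x, vt x = (1 / (σ * √m)) * ∑ l ∈ Finset.Icc 1 m, w l * κ (gridPt m l) x)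
    {x : ℝ} (hx : x ∈ I01) :
    |(∫ y in (0:ℝ)..1, κ y x * ((√m)⁻¹ * ∑ i ∈ Finset.Icc 1 m, z i * κ y (gridPt m i)))
        - σ ^ 2 * vt x| ≤ CK ^ 2 / (6 * m ^ 2) := by
  have hsqrt : 0 < √(m : ℝ) := Real.sqrt_pos.2 (by exact_mod_cast hm)
  have h := abs_integral_mul_sum_sub_le (g := fun y => κ y x) (c := (√m)⁻¹) hz (by positivity)
    (fun i hi => ((hker.continuousOn_left hx).mul
      (hker.continuousOn_left (gridPt_mem_I01 hi))).intervalIntegrable_of_Icc zero_le_one)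
    (fun i hi => hker.abs_integral_mul_sub_midpointSum_left_le hm hx (gridPt_mem_I01 hi)) hA
  rw [show (√m)⁻¹ * σ * ∑ l ∈ Finset.Icc 1 m, w l * κ (gridPt m l) x = σ ^ 2 * vt x by
      rw [hvt]; field_simp,
    abs_of_pos (inv_pos.2 hsqrt)] at h
  exact h.trans_eq (by field_simp)

theorem abs_kernel_adjoint_kernel_apply_sub_le
    (hker : IsC2KernelWith κ κ10 κ01 κ20 κ11 κ02 CK)
    (hm : 0 < m) (hσ : 0 < σ)
    (hw : ∑ l ∈ Finset.Icc 1 m, w l ^ 2 = 1) (hz : ∑ l ∈ Finset.Icc 1 m, z l ^ 2 = 1)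
    (hAt : ∀ i ∈ Finset.Icc 1 m,
      (∑ l ∈ Finset.Icc 1 m, (κ (gridPt m l) (gridPt m i) / m) * w l) = σ * z i)
    (hA : ∀ i ∈ Finset.Icc 1 m,
      (∑ l ∈ Finset.Icc 1 m, (κ (gridPt m i) (gridPt m l) / m) * z l) = σ * w i)
    (hvt : ∀ x, vt x = (1 / (σ * √m)) * ∑ l ∈ Finset.Icc 1 m, w l * κ (gridPt m l) x)
    {x : ℝ} (hx : x ∈ I01) :
    |(∫ y in (0:ℝ)..1, κ y x * ∫ t in (0:ℝ)..1, κ y t * vt t) - σ ^ 2 * vt x|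
      ≤ CK ^ 2 / (6 * m ^ 2) + CK ^ 3 / (6 * σ * m ^ 2) := by
  set u := fun y => (√m)⁻¹ * ∑ i ∈ Finset.Icc 1 m, z i * κ y (gridPt m i)
  have hvt_cont : ContinuousOn vt I01 :=
    (continuousOn_const.mul (continuousOn_finsetSum _ fun l hl => continuousOn_const.mul
      (hker.continuousOn_right (gridPt_mem_I01 hl)))).congr fun x _ => hvt x
  have hKvt_cont : ContinuousOn (fun y => ∫ t in (0:ℝ)..1, κ y t * vt t) I01 :=
    continuousOn_intervalIntegral_of_continuousOn_prod isCompact_Icc <| by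
      rw [uIcc_zero_one]
      exact hker.continuousOn.mul (hvt_cont.comp continuousOn_snd fun p hp => hp.2)
  have hu_cont : ContinuousOn u I01 :=
    continuousOn_const.mul (continuousOn_finsetSum _ fun i hi => continuousOn_const.mul
      (hker.continuousOn_left (gridPt_mem_I01 hi)))
  calc _ ≤ |(∫ y in (0:ℝ)..1, κ y x * ∫ t in (0:ℝ)..1, κ y t * vt t) - ∫ y in (0:ℝ)..1, κ y x * u y|
        + |(∫ y in (0:ℝ)..1, κ y x * u y) - σ ^ 2 * vt x| := abs_sub_le _ _ _
    _ ≤ CK * (CK ^ 2 / (6 * σ * m ^ 2)) * |1 - 0| + CK ^ 2 / (6 * m ^ 2) := add_le_add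
        (abs_integral_mul_sub_integral_mul_le
          (((hker.continuousOn_left hx).mul hKvt_cont).intervalIntegrable_of_Icc zero_le_one)
          (((hker.continuousOn_left hx).mul hu_cont).intervalIntegrable_of_Icc zero_le_one)
          (fun y hy => hker.abs_le (uIcc_zero_one ▸ hy) hx)
          (fun y hy => abs_kernel_apply_sub_le hker hm hσ hw hAt hvt (uIcc_zero_one ▸ hy)))
        (abs_kernel_adjoint_apply_sub_le hker hm hσ hz hA hvt hx)
    _ = CK ^ 2 / (6 * m ^ 2) + CK ^ 3 / (6 * σ * m ^ 2) := by norm_num; ring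

end Kernel

/-- Suppose `w̃_{j,m}, z̃_{j,m} ∈ ℝᵐ` are unit vectors and `σ̃_{j,m} > 0`
satisfy `A_mᵀ w̃_{j,m} = σ̃_{j,m} z̃_{j,m}` and `A_m z̃_{j,m} = σ̃_{j,m} w̃_{j,m}`, and set
`ṽ_{j,m} = (1/(σ̃_{j,m}√m)) Σ_l (w̃_{j,m})_l κ(ξ_{l,m},·)`.  Then
`‖K*K ṽ_{j,m} − σ̃_{j,m}² ṽ_{j,m}‖_{L²(0,1)} ≤ C_K²/(6m²) + C_K³/(6 σ̃_{j,m} m²)`,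
i.e. `ṽ_{j,m}` is an approximate eigenfunction of `K*K` with approximate
eigenvalue `σ̃_{j,m}²`. -/
theorem stmt_13 (κ κ10 κ01 κ20 κ11 κ02 : ℝ → ℝ → ℝ) (CK : ℝ)
    (hker : IsC2KernelWith κ κ10 κ01 κ20 κ11 κ02 CK)
    (m : ℕ) (hm : 1 ≤ m)
    (w z : ℕ → ℝ) (σt : ℝ) (hσt : 0 < σt)
    (hwunit : (∑ l ∈ Finset.Icc 1 m, w l ^ 2) = 1)
    (hzunit : (∑ l ∈ Finset.Icc 1 m, z l ^ 2) = 1)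
    (hAt : ∀ i ∈ Finset.Icc 1 m,
      (∑ l ∈ Finset.Icc 1 m, (κ (gridPt m l) (gridPt m i) / m) * w l) = σt * z i)
    (hA : ∀ i ∈ Finset.Icc 1 m,
      (∑ l ∈ Finset.Icc 1 m, (κ (gridPt m i) (gridPt m l) / m) * z l) = σt * w i)
    (vt : ℝ → ℝ)
    (hvt : ∀ x : ℝ, vt x = (1 / (σt * Real.sqrt m)) * ∑ l ∈ Finset.Icc 1 m, w l * κ (gridPt m l) x) :
    Real.sqrt (∫ x in (0:ℝ)..1,
        ((∫ y in (0:ℝ)..1, κ y x * ∫ z' in (0:ℝ)..1, κ y z' * vt z') - σt ^ 2 * vt x) ^ 2)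
      ≤ CK ^ 2 / (6 * (m : ℝ) ^ 2) + CK ^ 3 / (6 * σt * (m : ℝ) ^ 2) := by
  have hCK := hker.nonneg
  refine (sqrt_integral_sq_le (by positivity) fun x hx =>
    abs_kernel_adjoint_kernel_apply_sub_le hker hm hσt hwunit hzunit hAt hA hvt
      (uIcc_zero_one ▸ uIoc_subset_uIcc hx)).trans_eq ?_
  norm_num
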